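/- Let n ≥ 2 and take the ideal observables A^{(j)}_x. Then for every s ∈ {0,1}^n, W_s = Σ_{s'∈{0,1}^n} μ_{s,s'} |ξ_{s'}⟩⟨ξ_{s'}|, where μ_{s,s'} = √2 Σ_{j=2}^n (−1)^{s'_j ⊕ s_j} + √2(n−1)(−1)^{s'_1 ⊕ s_1} (⊕ denoting XOR of bits). Moreover μ_{s,s'} < 2√2(n−1) whenever s' ≠ s; hence the maximal eigenvalue 2√2(n−1) of W_s is nondegenerate, with one-dimensional eigenspace spanned by |ξ_s⟩. -/

import Mathlib

open Matrix Finset ComplexOrder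

noncomputable section

/-- 2×2 complex matrices. -/
abbrev Mat2 := Matrix (Fin 2) (Fin 2) ℂ

/-- The Pauli matrix `σ_X`. -/
def σX : Mat2 := !![0, 1; 1, 0]

/-- The Pauli matrix `σ_Z`. -/
def σZ : Mat2 := !![1, 0; 0, -1]

/-- Tensor product of `n` 2×2 matrices, indexed by bit strings `Fin n → Fin 2`. -/
def tensorN (n : ℕ) (M : Fin n → Mat2) :
    Matrix (Fin n → Fin 2) (Fin n → Fin 2) ℂ :=
  Matrix.of fun f g => ∏ j, M j (f j) (g j)

/-- The operator `W_s` built from the observables `A^{(j)}_x`. -/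
def Wop (n : ℕ) [NeZero n] (A : Fin n → Fin 2 → Mat2) (s : Fin n → Fin 2) :
    Matrix (Fin n → Fin 2) (Fin n → Fin 2) ℂ :=
  (((n : ℂ) - 1) * (-1 : ℂ) ^ ((s 0 : ℕ))) •
      tensorN n (fun j => if j = 0 then A 0 0 + A 0 1 else A j 0)
    + ∑ j ∈ Finset.univ.filter (fun j : Fin n => j ≠ 0),
        ((-1 : ℂ) ^ ((s j : ℕ))) •
          tensorN n (fun k => if k = 0 then A 0 0 - A 0 1
            else if k = j then A j 1 else 1)

/-- The ideal observables. -/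
def Aideal (n : ℕ) [NeZero n] : Fin n → Fin 2 → Mat2 :=
  fun j x =>
    if j = 0 then ((Real.sqrt 2 : ℂ))⁻¹ • (σX + ((-1 : ℂ) ^ ((x : ℕ))) • σZ)
    else if x = 0 then σX else σZ

/-- The GHZ-basis vector `|ξ_s⟩`. -/
def ghz (n : ℕ) [NeZero n] (s : Fin n → Fin 2) : (Fin n → Fin 2) → ℂ :=
  fun f => ((Real.sqrt 2 : ℂ))⁻¹ *
    ((if f = (fun j => if j = 0 then 0 else s j) then 1 else 0)
      + (-1 : ℂ) ^ ((s 0 : ℕ)) *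
        (if f = (fun j => if j = 0 then 1 else 1 - s j) then 1 else 0))

/-- The eigenvalues `μ_{s,s'} = √2 Σ_{j≥2} (−1)^{s'_j ⊕ s_j} + √2(n−1)(−1)^{s'_1 ⊕ s_1}`. -/
def μval (n : ℕ) [NeZero n] (s s' : Fin n → Fin 2) : ℝ :=
  Real.sqrt 2 * (∑ j ∈ Finset.univ.filter (fun j : Fin n => j ≠ 0),
      (-1 : ℝ) ^ (((s' j + s j : Fin 2) : ℕ)))
    + Real.sqrt 2 * ((n : ℝ) - 1) * (-1 : ℝ) ^ (((s' 0 + s 0 : Fin 2) : ℕ))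

/-!
For the ideal observables `A⁽¹⁾₀ + A⁽¹⁾₁ = √2 σ_X` and `A⁽¹⁾₀ - A⁽¹⁾₁ = √2 σ_Z`, so `W_s` is a real
combination of the GHZ stabilizers `X^{⊗n}` and `Z₁Z_j` (`j ≥ 2`). Each `ξ_t` is a common
eigenvector, `X^{⊗n} ξ_t = (-1)^{t₁} ξ_t` and `Z₁Z_j ξ_t = (-1)^{t_j} ξ_t`, whence
`W_s ξ_t = μ_{s,t} ξ_t`. The `2ⁿ` vectors `ξ_t` are orthonormal, hence a basis, which gives the
spectral decomposition; an eigenvector for `2√2(n-1)` has no component along `ξ_t` for `t ≠ s`,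
as `μ_{s,t} < 2√2(n-1)` there.
-/

section OrthonormalBasis

variable {𝕜 ι κ : Type*} [Field 𝕜] [StarRing 𝕜] [Fintype ι] [Fintype κ] {u : ι → κ → 𝕜}

lemma sum_smul_vecMulVec_star_mulVec (μ : ι → 𝕜) (v : κ → 𝕜) :
    (∑ a, μ a • vecMulVec (u a) (star (u a))) *ᵥ v = ∑ a, (μ a * (star (u a) ⬝ᵥ v)) • u a := by
  simp [sum_mulVec, smul_mulVec, vecMulVec_mulVec, smul_smul]

variable [DecidableEq ι]

lemma star_dotProduct_sum_smul (hu : ∀ a b, star (u a) ⬝ᵥ u b = if a = b then 1 else 0)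
    (d : ι → 𝕜) (t : ι) : star (u t) ⬝ᵥ ∑ a, d a • u a = d t := by
  simp [dotProduct_sum, dotProduct_smul, hu]

variable [DecidableEq κ]

lemma sum_vecMulVec_star_eq_one (hcard : Fintype.card ι = Fintype.card κ)
    (hu : ∀ a b, star (u a) ⬝ᵥ u b = if a = b then 1 else 0) :
    ∑ a, vecMulVec (u a) (star (u a)) = 1 := by
  let U : Matrix κ ι 𝕜 := Matrix.of fun f a => u a f
  have hUU : Uᴴ * U = 1 := by
    ext a b
    simpa [U, Matrix.mul_apply, dotProduct, Matrix.one_apply] using hu a b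
  rw [← (Matrix.mul_eq_one_comm_of_card_eq κ ι 𝕜 hcard.symm).mpr hUU]
  ext f g
  simp [U, Matrix.mul_apply, Matrix.sum_apply, vecMulVec_apply]

lemma eq_sum_smul_vecMulVec_star (hcard : Fintype.card ι = Fintype.card κ)
    (hu : ∀ a b, star (u a) ⬝ᵥ u b = if a = b then 1 else 0) {M : Matrix κ κ 𝕜} {μ : ι → 𝕜}
    (hM : ∀ a, M *ᵥ u a = μ a • u a) :
    M = ∑ a, μ a • vecMulVec (u a) (star (u a)) := by
  calc M = M * ∑ a, vecMulVec (u a) (star (u a)) := by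
        rw [sum_vecMulVec_star_eq_one hcard hu, mul_one]
    _ = ∑ a, μ a • vecMulVec (u a) (star (u a)) := by
      simp only [mul_sum, mul_vecMulVec, hM, smul_vecMulVec]

lemma exists_eq_smul_of_mulVec_eq_smul (hcard : Fintype.card ι = Fintype.card κ)
    (hu : ∀ a b, star (u a) ⬝ᵥ u b = if a = b then 1 else 0) {μ : ι → 𝕜} {s : ι} {r : 𝕜}
    (hμ : ∀ a, a ≠ s → μ a ≠ r) {v : κ → 𝕜}
    (hv : (∑ a, μ a • vecMulVec (u a) (star (u a))) *ᵥ v = r • v) :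
    ∃ c : 𝕜, v = c • u s := by
  have hexpand : v = ∑ a, (star (u a) ⬝ᵥ v) • u a := by
    simpa [sum_vecMulVec_star_eq_one hcard hu] using sum_smul_vecMulVec_star_mulVec (u := u) 1 v
  have hcoeff : ∀ a, a ≠ s → star (u a) ⬝ᵥ v = 0 := by
    intro a ha
    have h := congrArg (star (u a) ⬝ᵥ ·) hv
    simp only [sum_smul_vecMulVec_star_mulVec, star_dotProduct_sum_smul hu, dotProduct_smul,
      smul_eq_mul] at h
    exact (mul_eq_mul_right_iff.mp h).resolve_left (hμ a ha)
  refine ⟨star (u s) ⬝ᵥ v, ?_⟩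
  exact hexpand.trans <| Fintype.sum_eq_single s fun a ha => by rw [hcoeff a ha, zero_smul]

end OrthonormalBasis

section Signs

variable {R : Type*} [Monoid R] [HasDistribNeg R]

lemma neg_one_pow_fin_two_add (a b : Fin 2) :
    (-1 : R) ^ ((a + b : Fin 2) : ℕ) = (-1) ^ (a : ℕ) * (-1) ^ (b : ℕ) := by
  fin_cases a <;> fin_cases b <;> simp

lemma neg_one_pow_fin_two_one_sub (a : Fin 2) :
    (-1 : R) ^ ((1 - a : Fin 2) : ℕ) = -(-1) ^ (a : ℕ) := by
  fin_cases a <;> simp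

lemma neg_one_pow_fin_two_mul_self (a : Fin 2) : (-1 : R) ^ (a : ℕ) * (-1) ^ (a : ℕ) = 1 := by
  fin_cases a <;> simp

lemma neg_one_pow_fin_two_mul_of_ne {a b : Fin 2} (h : a ≠ b) :
    (-1 : R) ^ (a : ℕ) * (-1) ^ (b : ℕ) = -1 := by
  fin_cases a <;> fin_cases b <;> simp_all

end Signs

def bitFlip {ι : Type*} (f : ι → Fin 2) : ι → Fin 2 := fun j => 1 - f j

lemma bitFlip_involutive {ι : Type*} : Function.Involutive (bitFlip (ι := ι)) :=
  fun f => funext fun j => sub_sub_cancel 1 (f j)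

lemma bitFlip_ne {ι : Type*} [Nonempty ι] (f : ι → Fin 2) : bitFlip f ≠ f := by
  obtain ⟨j⟩ := ‹Nonempty ι›
  have hfix : ∀ a : Fin 2, 1 - a ≠ a := by decide
  exact fun h => hfix (f j) (congrFun h j)

section GHZ

variable {n : ℕ}

lemma tensorN_smul (c : Fin n → ℂ) (M : Fin n → Mat2) :
    tensorN n (fun j => c j • M j) = (∏ j, c j) • tensorN n M := by
  ext f g
  simp [tensorN, prod_mul_distrib]

lemma tensorN_diagonal (d : Fin n → Fin 2 → ℂ) :
    tensorN n (fun j => diagonal (d j)) = diagonal fun f => ∏ j, d j (f j) := by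
  ext f g
  simp [tensorN, diagonal_apply, prod_ite_zero, funext_iff]

lemma tensorN_σX_mulVec (v : (Fin n → Fin 2) → ℂ) :
    tensorN n (fun _ => σX) *ᵥ v = fun f => v (bitFlip f) := by
  have hσX : ∀ a b : Fin 2, σX a b = if 1 - a = b then 1 else 0 := by
    intro a b; fin_cases a <;> fin_cases b <;> simp [σX]
  funext f
  simp [mulVec, dotProduct, tensorN, hσX, prod_boole, ← funext_iff]
  rfl

lemma σZ_eq_diagonal : σZ = diagonal fun a : Fin 2 => (-1 : ℂ) ^ (a : ℕ) := by
  ext i j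
  fin_cases i <;> fin_cases j <;> simp [σZ]

lemma ofReal_sqrt_two_mul_self : ((Real.sqrt 2 : ℂ)) * (Real.sqrt 2 : ℂ) = 2 := by
  rw [← Complex.ofReal_mul, Real.mul_self_sqrt zero_le_two, Complex.ofReal_ofNat]

lemma ofReal_sqrt_two_inv : ((Real.sqrt 2 : ℂ))⁻¹ = (Real.sqrt 2 : ℂ) / 2 := by
  have hne : ((Real.sqrt 2 : ℂ)) ≠ 0 := by exact_mod_cast (Real.sqrt_pos.2 two_pos).ne'
  rw [eq_div_iff two_ne_zero, ← ofReal_sqrt_two_mul_self, inv_mul_cancel_left₀ hne]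

variable [NeZero n]

lemma Aideal_zero_add : Aideal n 0 0 + Aideal n 0 1 = (Real.sqrt 2 : ℂ) • σX := by
  simp only [Aideal, ↓reduceIte, ofReal_sqrt_two_inv]
  ext i j
  fin_cases i <;> fin_cases j <;> simp [σX, σZ, add_halves]

lemma Aideal_zero_sub : Aideal n 0 0 - Aideal n 0 1 = (Real.sqrt 2 : ℂ) • σZ := by
  simp only [Aideal, ↓reduceIte, ofReal_sqrt_two_inv]
  ext i j
  fin_cases i <;> fin_cases j <;> simp [σX, σZ, ← neg_add', add_halves]

lemma Wop_Aideal (s : Fin n → Fin 2) :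
    Wop n (Aideal n) s =
      (((n : ℂ) - 1) * (-1) ^ (s 0 : ℕ) * Real.sqrt 2) • tensorN n (fun _ => σX)
      + ∑ j ∈ Finset.univ.filter (fun j : Fin n => j ≠ 0), ((-1 : ℂ) ^ (s j : ℕ) * Real.sqrt 2) •
          diagonal (fun f => (-1 : ℂ) ^ (f 0 : ℕ) * (-1) ^ (f j : ℕ)) := by
  have hX : (fun j => if j = 0 then Aideal n 0 0 + Aideal n 0 1 else Aideal n j 0)
      = fun j => (if j = 0 then (Real.sqrt 2 : ℂ) else 1) • σX := by
    funext j
    split_ifs with hj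
    · exact Aideal_zero_add
    · simp [Aideal, hj]
  have hZZ : ∀ j ∈ Finset.univ.filter (fun j : Fin n => j ≠ 0),
      (fun k => if k = 0 then Aideal n 0 0 - Aideal n 0 1 else if k = j then Aideal n j 1 else 1)
        = fun k => (if k = 0 then (Real.sqrt 2 : ℂ) else 1) • diagonal fun a : Fin 2 =>
            (if k = 0 then (-1 : ℂ) ^ (a : ℕ) else 1) * (if k = j then (-1) ^ (a : ℕ) else 1) := by
    intro j hj
    have hj0 : j ≠ 0 := (mem_filter.mp hj).2
    funext k
    by_cases hk0 : k = 0
    · simp [hk0, hj0.symm, Aideal_zero_sub, σZ_eq_diagonal]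
    by_cases hkj : k = j
    · simp [hkj, hj0, Aideal, σZ_eq_diagonal]
    · simp [hk0, hkj]
  rw [Wop, hX, tensorN_smul, smul_smul]
  congr 1
  · simp [prod_ite_eq']
  · refine sum_congr rfl fun j hj => ?_
    rw [hZZ j hj, tensorN_smul, tensorN_diagonal, smul_smul]
    simp only [prod_mul_distrib, prod_ite_eq', mem_univ, if_true]

/-- The bit string `0 s₂ ⋯ sₙ`; `ξ_s` is supported on it and on its flip `1 s̄₂ ⋯ s̄ₙ`. -/
def ghzBase (s : Fin n → Fin 2) : Fin n → Fin 2 := fun j => if j = 0 then 0 else s j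

lemma ghz_apply (s f : Fin n → Fin 2) :
    ghz n s f = ((Real.sqrt 2 : ℂ))⁻¹ * ((if f = ghzBase s then 1 else 0)
      + (-1 : ℂ) ^ ((s 0 : ℕ)) * (if f = bitFlip (ghzBase s) then 1 else 0)) := by
  have h : bitFlip (ghzBase s) = fun j => if j = 0 then 1 else 1 - s j := by
    funext j; by_cases hj : j = 0 <;> simp [bitFlip, ghzBase, hj]
  rw [h]; rfl

lemma ghz_bitFlip (s f : Fin n → Fin 2) :
    ghz n s (bitFlip f) = (-1 : ℂ) ^ ((s 0 : ℕ)) * ghz n s f := by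
  simp only [ghz_apply, bitFlip_involutive.eq_iff, bitFlip_involutive (ghzBase s)]
  have hne : ghzBase s ≠ bitFlip (ghzBase s) := (bitFlip_ne _).symm
  have hsq := neg_one_pow_fin_two_mul_self (R := ℂ) (s 0)
  split_ifs <;> simp_all only [mul_one, mul_zero, add_zero, zero_add]
  · linear_combination (-((Real.sqrt 2 : ℂ))⁻¹) * hsq
  · ring

lemma ghz_parity {j : Fin n} (hj : j ≠ 0) (s f : Fin n → Fin 2) :
    (-1 : ℂ) ^ ((f 0 : ℕ)) * (-1) ^ ((f j : ℕ)) * ghz n s f = (-1) ^ ((s j : ℕ)) * ghz n s f := by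
  by_cases h0 : f = ghzBase s
  · simp [h0, ghzBase, hj]
  by_cases h1 : f = bitFlip (ghzBase s)
  · simp [h1, ghzBase, bitFlip, hj, neg_one_pow_fin_two_one_sub]
  simp [ghz_apply, h0, h1]

lemma star_ghz (s : Fin n → Fin 2) : star (ghz n s) = ghz n s := by
  funext f
  rw [Pi.star_apply, ghz_apply]
  split_ifs <;> simp

lemma ghz_dotProduct_self (s : Fin n → Fin 2) : ghz n s ⬝ᵥ ghz n s = 1 := by
  have hne : ghzBase s ≠ bitFlip (ghzBase s) := (bitFlip_ne _).symm
  rw [dotProduct, Fintype.sum_eq_add _ _ hne fun f ⟨h0, h1⟩ => by simp [ghz_apply, h0, h1]]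
  simp only [ghz_apply, ↓reduceIte, if_neg hne, if_neg hne.symm, mul_one, mul_zero, add_zero,
    zero_add]
  have hsq := neg_one_pow_fin_two_mul_self (R := ℂ) (s 0)
  have h2 := ofReal_sqrt_two_mul_self
  field_simp
  linear_combination hsq - h2

lemma ghz_dotProduct_of_ne {a b : Fin n → Fin 2} (h : a ≠ b) : ghz n a ⬝ᵥ ghz n b = 0 := by
  obtain ⟨j, hj⟩ := Function.ne_iff.mp h
  have hsign := neg_one_pow_fin_two_mul_of_ne (R := ℂ) hj
  -- `ξ_a` and `ξ_b` are eigenvectors of an involution (the global flip, or `Z₁Z_j`) with opposite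
  -- eigenvalues.
  rw [← self_eq_neg]
  by_cases hj0 : j = 0
  · subst hj0
    calc ghz n a ⬝ᵥ ghz n b = ∑ f, ghz n a (bitFlip f) * ghz n b (bitFlip f) :=
          (bitFlip_involutive.bijective.sum_comp fun f => ghz n a f * ghz n b f).symm
      _ = -(ghz n a ⬝ᵥ ghz n b) := by
          simp only [ghz_bitFlip, dotProduct, ← sum_neg_distrib]
          exact sum_congr rfl fun f _ => by
            linear_combination (ghz n a f * ghz n b f) * hsign
  · rw [dotProduct, ← sum_neg_distrib]
    refine sum_congr rfl fun f _ => ?_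
    set z : ℂ := (-1) ^ ((f 0 : ℕ)) * (-1) ^ ((f j : ℕ))
    have hz : z * z = 1 := by
      rw [mul_mul_mul_comm, neg_one_pow_fin_two_mul_self, neg_one_pow_fin_two_mul_self, one_mul]
    calc ghz n a f * ghz n b f = (z * ghz n a f) * (z * ghz n b f) := by
          linear_combination (-(ghz n a f * ghz n b f)) * hz
      _ = ((-1) ^ ((a j : ℕ)) * ghz n a f) * ((-1) ^ ((b j : ℕ)) * ghz n b f) := by
          rw [ghz_parity hj0, ghz_parity hj0]
      _ = -(ghz n a f * ghz n b f) := by linear_combination (ghz n a f * ghz n b f) * hsign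

lemma star_ghz_dotProduct_ghz (a b : Fin n → Fin 2) :
    star (ghz n a) ⬝ᵥ ghz n b = if a = b then 1 else 0 := by
  rw [star_ghz]
  split_ifs with h
  · rw [h, ghz_dotProduct_self]
  · exact ghz_dotProduct_of_ne h

lemma ofReal_μval (s t : Fin n → Fin 2) :
    ((μval n s t : ℝ) : ℂ) =
      ((n : ℂ) - 1) * (-1) ^ (s 0 : ℕ) * Real.sqrt 2 * (-1) ^ (t 0 : ℕ)
      + ∑ j ∈ Finset.univ.filter (fun j : Fin n => j ≠ 0),
          (-1 : ℂ) ^ (s j : ℕ) * Real.sqrt 2 * (-1) ^ (t j : ℕ) := by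
  simp only [μval]
  push_cast
  simp only [neg_one_pow_fin_two_add, mul_sum]
  rw [add_comm]
  congr 1
  · ring
  · exact sum_congr rfl fun j _ => by ring

lemma Wop_Aideal_mulVec_ghz (s t : Fin n → Fin 2) :
    Wop n (Aideal n) s *ᵥ ghz n t = ((μval n s t : ℝ) : ℂ) • ghz n t := by
  rw [Wop_Aideal, add_mulVec, smul_mulVec, tensorN_σX_mulVec, sum_mulVec]
  funext f
  simp only [Pi.add_apply, Pi.smul_apply, Finset.sum_apply, smul_mulVec, mulVec_diagonal,
    smul_eq_mul, ghz_bitFlip, ofReal_μval, add_mul, sum_mul]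
  congr 1
  · ring
  · exact sum_congr rfl fun j hj => by rw [ghz_parity (mem_filter.mp hj).2]; ring

lemma sum_filter_ne_zero_one :
    ∑ _j ∈ Finset.univ.filter (fun j : Fin n => j ≠ 0), (1 : ℝ) = n - 1 := by
  rw [sum_const, nsmul_one, filter_ne', card_erase_of_mem (mem_univ _),
    card_univ, Fintype.card_fin, Nat.cast_sub NeZero.one_le, Nat.cast_one]

lemma μval_lt (hn : 2 ≤ n) {s t : Fin n → Fin 2} (h : t ≠ s) :
    μval n s t < 2 * Real.sqrt 2 * ((n : ℝ) - 1) := by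
  set e : Fin n → ℝ := fun j => (-1) ^ ((t j + s j : Fin 2) : ℕ) with he_def
  have he_le : ∀ j ∈ Finset.univ.filter (fun j : Fin n => j ≠ 0), e j ≤ 1 := fun j _ => by
    simp only [he_def]; generalize t j + s j = a; fin_cases a <;> norm_num
  have he_ne : ∀ j, t j ≠ s j → e j = -1 := fun j hj => by
    simp only [he_def, neg_one_pow_fin_two_add, neg_one_pow_fin_two_mul_of_ne hj]
  have hsqrt : 0 < Real.sqrt 2 := Real.sqrt_pos.2 two_pos
  have hn1 : (1 : ℝ) ≤ n - 1 := by
    have : (2 : ℝ) ≤ n := by exact_mod_cast hn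
    linarith
  change Real.sqrt 2 * (∑ j ∈ _, e j) + Real.sqrt 2 * ((n : ℝ) - 1) * e 0 < _
  by_cases h0 : t 0 = s 0
  · obtain ⟨j, hj⟩ := Function.ne_iff.mp h
    have hj0 : j ≠ 0 := fun hj0 => hj (hj0 ▸ h0)
    have hlt : ∑ j ∈ Finset.univ.filter (fun j : Fin n => j ≠ 0), e j < (n : ℝ) - 1 :=
      sum_filter_ne_zero_one (n := n) ▸ sum_lt_sum he_le
        ⟨j, mem_filter.mpr ⟨mem_univ j, hj0⟩, by rw [he_ne j hj]; norm_num⟩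
    have he0 : e 0 = 1 := by
      simp [he_def, h0, neg_one_pow_fin_two_add, neg_one_pow_fin_two_mul_self]
    rw [he0]
    nlinarith
  · have hle : ∑ j ∈ Finset.univ.filter (fun j : Fin n => j ≠ 0), e j ≤ (n : ℝ) - 1 :=
      sum_filter_ne_zero_one (n := n) ▸ sum_le_sum he_le
    rw [he_ne 0 h0]
    nlinarith

end GHZ

/-- for the ideal observables, `W_s` has the spectral decomposition
`W_s = Σ_{s'} μ_{s,s'} |ξ_{s'}⟩⟨ξ_{s'}|`, with `μ_{s,s'} < 2√2(n−1)` for `s' ≠ s`;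
hence the maximal eigenvalue `2√2(n−1)` is nondegenerate with eigenspace spanned
by `|ξ_s⟩`. -/
theorem stmt10 (n : ℕ) [NeZero n] (hn : 2 ≤ n) (s : Fin n → Fin 2) :
    (Wop n (Aideal n) s
        = ∑ s' : Fin n → Fin 2, ((μval n s s' : ℝ) : ℂ) •
            vecMulVec (ghz n s') (star (ghz n s')))
    ∧ (∀ s' : Fin n → Fin 2, s' ≠ s →
        μval n s s' < 2 * Real.sqrt 2 * ((n : ℝ) - 1))
    ∧ (∀ v : (Fin n → Fin 2) → ℂ,
        (Wop n (Aideal n) s).mulVec v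
          = ((2 * Real.sqrt 2 * ((n : ℝ) - 1) : ℝ) : ℂ) • v →
        ∃ c : ℂ, v = c • ghz n s) := by
  have hspectral := eq_sum_smul_vecMulVec_star rfl star_ghz_dotProduct_ghz (Wop_Aideal_mulVec_ghz s)
  refine ⟨hspectral, fun t ht => μval_lt hn ht, fun v hv => ?_⟩
  rw [hspectral] at hv
  exact exists_eq_smul_of_mulVec_eq_smul rfl star_ghz_dotProduct_ghz
    (fun t ht h => (μval_lt hn ht).ne (Complex.ofReal_injective h)) hv
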